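/- arXiv:2501.18601 — 4 statements merged into one kernel-verified Lean document; each statement's English description precedes it below -/
import Mathlib

section
/- The reduced rewriting system suffices: the move replacing the second relator by its inverse, (x,y) ↦ (x,y⁻¹), is derivable from the moves (x,y) ↦ (x⁻¹,y), (x,y) ↦ (x*y,y), (x,y) ↦ (x,y*x), and conjugation of the first relator (x,y) ↦ (w*x*w⁻¹,y), in the sense that (x, y⁻¹) is reachable from (x, y) by a finite sequence of these moves in the free group on two generators. -/
namespace Stmt4

abbrev F := FreeGroup Bool

/-- The reduced move set rACT₂: invert first relator, multiply relators,
and conjugate the first relator. -/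
inductive RMove : F × F → F × F → Prop
  | inv_left (x y : F) : RMove (x, y) (x⁻¹, y)
  | mul_left (x y : F) : RMove (x, y) (x * y, y)
  | mul_right (x y : F) : RMove (x, y) (x, y * x)
  | conj_left (x y w : F) : RMove (x, y) (w * x * w⁻¹, y)

lemma swap_derivable (x y : F) :
    Relation.ReflTransGen RMove (x, y) (y, x) := by
  refine .head (RMove.inv_left x y) ?_
  refine .head (RMove.mul_left _ _) ?_
  refine .head (RMove.inv_left _ _) ?_
  refine .head (RMove.mul_right _ _) ?_
  refine .head (RMove.inv_left _ _) ?_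
  refine .head (RMove.mul_left _ _) ?_
  refine .head (RMove.conj_left _ _ x) ?_
  convert Relation.ReflTransGen.refl using 2 <;> group

theorem inv_right_derivable (x y : F) :
    Relation.ReflTransGen RMove (x, y) (x, y⁻¹) := by
  have h1 := swap_derivable x y
  have h2 : Relation.ReflTransGen RMove (y, x) (y⁻¹, x) := .single (RMove.inv_left y x)
  have h3 := swap_derivable (y⁻¹) x
  exact (h1.trans h2).trans h3

end Stmt4
end

section
/- The group presented by AK(n) = ⟨a, b | aⁿ b⁻⁽ⁿ⁺¹⁾, a b a b⁻¹ a⁻¹ b⁻¹⟩ is trivial for every n ≥ 1. Equivalently, in the free group F on {a,b}, the normal closure of {aⁿ*b⁻⁽ⁿ⁺¹⁾, a*b*a*b⁻¹*a⁻¹*b⁻¹} is all of F. -/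
/-!
Conjugation by `a * b` sends `a` to `b`, by the braid relation. The first relator makes
`a ^ n = b ^ (n + 1)` commute with both generators, so conjugating `a ^ (n + 1) = a ^ n * a`
by `a * b` yields `a ^ n * b`, while conjugating `a ^ (n + 1)` termwise yields
`b ^ (n + 1) = a ^ n`. Hence `b = 1`, and then the braid relation forces `a = 1`.
-/

namespace Stmt6

abbrev F := FreeGroup Bool

def a : F := FreeGroup.of true
def b : F := FreeGroup.of false

section Braid

variable {G : Type*} [Group G] {x y : G}

theorem conj_mul_eq_of_braid (hbraid : x * y * x = y * x * y) :
    (x * y) * x * (x * y)⁻¹ = y := by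
  rw [mul_inv_eq_iff_eq_mul, hbraid]
  group

theorem eq_one_of_pow_eq_pow_succ_of_braid {n : ℕ} (hpow : x ^ n = y ^ (n + 1))
    (hbraid : x * y * x = y * x * y) : x = 1 ∧ y = 1 := by
  have hconj := conj_mul_eq_of_braid hbraid
  have hcomm : Commute (x ^ n) (x * y) :=
    ((Commute.refl x).pow_left n).mul_right (hpow ▸ (Commute.refl y).pow_left (n + 1))
  have hy : x ^ n * y = x ^ n :=
    calc x ^ n * y = x ^ n * ((x * y) * x * (x * y)⁻¹) := by rw [hconj]
      _ = (x * y) * (x ^ n * x) * (x * y)⁻¹ := by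
          rw [← mul_assoc, ← mul_assoc, hcomm.eq]; group
      _ = ((x * y) * x * (x * y)⁻¹) ^ (n + 1) := by rw [conj_pow, pow_succ]
      _ = x ^ n := by rw [hconj, hpow]
  have hy1 : y = 1 := mul_eq_left.mp hy
  subst hy1
  simp only [mul_one, one_mul] at hbraid
  exact ⟨mul_eq_left.mp hbraid, rfl⟩

end Braid

theorem FreeGroup.normalClosure_eq_top_of_forall_of_eq_one {α : Type*}
    {rels : Set (FreeGroup α)} (h : ∀ i, (PresentedGroup.of i : PresentedGroup rels) = 1) :
    Subgroup.normalClosure rels = ⊤ := by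
  rw [eq_top_iff, ← FreeGroup.closure_range_of, Subgroup.closure_le]
  rintro _ ⟨i, rfl⟩
  exact PresentedGroup.mk_eq_one_iff.mp (h i)

theorem ak_n_trivial_general (n : ℕ) :
    Subgroup.normalClosure
        ({a ^ n * (b ^ (n + 1))⁻¹, a * b * a * b⁻¹ * a⁻¹ * b⁻¹} : Set F) = ⊤ := by
  set rels : Set F := {a ^ n * (b ^ (n + 1))⁻¹, a * b * a * b⁻¹ * a⁻¹ * b⁻¹}
  let mk := PresentedGroup.mk rels
  have hpow : mk a ^ n = mk b ^ (n + 1) := by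
    rw [← map_pow, ← map_pow]
    exact PresentedGroup.mk_eq_mk_of_mul_inv_mem (Set.mem_insert _ _)
  have hbraid : mk a * mk b * mk a = mk b * mk a * mk b := by
    simp only [← map_mul]
    refine PresentedGroup.mk_eq_mk_of_mul_inv_mem ?_
    simp only [mul_inv_rev, ← mul_assoc]
    exact Set.mem_insert_of_mem _ rfl
  obtain ⟨ha, hb⟩ := eq_one_of_pow_eq_pow_succ_of_braid hpow hbraid
  refine FreeGroup.normalClosure_eq_top_of_forall_of_eq_one fun i => ?_
  cases i
  · exact hb
  · exact ha

theorem ak_n_trivial (n : ℕ) (hn : 1 ≤ n) :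
    Subgroup.normalClosure
        ({a ^ n * (b ^ (n + 1))⁻¹, a * b * a * b⁻¹ * a⁻¹ * b⁻¹} : Set F) = ⊤ :=
  ak_n_trivial_general n

end Stmt6
end

section
/- The group presented by AK(3), i.e. ⟨a, b | a³b⁻⁴, abab⁻¹a⁻¹b⁻¹⟩, is trivial: in the free group F on {a, b}, both a and b lie in the normal closure of {a³*b⁻⁴, a*b*a*b⁻¹*a⁻¹*b⁻¹}. -/
namespace Stmt7

abbrev F := FreeGroup Bool

def a : F := FreeGroup.of true
def b : F := FreeGroup.of false

lemma ak3_key {G : Type*} [Group G] {x y : G} (h1 : x ^ 3 = y ^ 4)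
    (h2 : x * y * x = y * x * y) : x = 1 ∧ y = 1 := by
  have comm : y * x ^ 3 = x ^ 3 * y := by
    rw [h1, ← pow_succ, ← pow_succ']
  have commx : x * x ^ 3 = x ^ 3 * x := by
    rw [← pow_succ, ← pow_succ']
  have ycx : y * (x * y * x) = (x * y * x) * x := by
    calc y * (x * y * x) = (y * x * y) * x := by simp [pow_succ, pow_zero, one_mul, mul_assoc]
    _ = (x * y * x) * x := by rw [h2]
  have h3 : y ^ 3 * (x * y * x) = (x * y * x) * x ^ 3 := by
    calc y ^ 3 * (x * y * x) = y * (y * (y * (x * y * x))) := by simp [pow_succ, pow_zero, one_mul, mul_assoc]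
    _ = y * (y * ((x * y * x) * x)) := by rw [ycx]
    _ = y * ((y * (x * y * x)) * x) := by simp [pow_succ, pow_zero, one_mul, mul_assoc]
    _ = y * (((x * y * x) * x) * x) := by rw [ycx]
    _ = (y * (x * y * x)) * (x * x) := by simp [pow_succ, pow_zero, one_mul, mul_assoc]
    _ = ((x * y * x) * x) * (x * x) := by rw [ycx]
    _ = (x * y * x) * x ^ 3 := by simp [pow_succ, pow_zero, one_mul, mul_assoc]
  have h4 : (x * y * x) * x ^ 3 = x ^ 3 * (x * y * x) := by
    calc (x * y * x) * x ^ 3 = x * y * (x * x ^ 3) := by simp [pow_succ, pow_zero, one_mul, mul_assoc]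
    _ = x * y * (x ^ 3 * x) := by rw [commx]
    _ = x * (y * x ^ 3) * x := by simp [pow_succ, pow_zero, one_mul, mul_assoc]
    _ = x * (x ^ 3 * y) * x := by rw [comm]
    _ = (x * x ^ 3) * (y * x) := by simp [pow_succ, pow_zero, one_mul, mul_assoc]
    _ = (x ^ 3 * x) * (y * x) := by rw [commx]
    _ = x ^ 3 * (x * y * x) := by simp [pow_succ, pow_zero, one_mul, mul_assoc]
  have hyx : y ^ 3 = x ^ 3 := mul_right_cancel (h3.trans h4)
  have hy : y = 1 := by
    have h5 : y ^ 3 * y = y ^ 3 * 1 := by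
      rw [mul_one, ← pow_succ, hyx, h1]
    exact mul_left_cancel h5
  have hx : x = 1 := by
    have h6 : x * x = x * 1 := by
      have h7 := h2
      rw [hy] at h7
      simpa using h7.symm
    exact mul_left_cancel h6
  exact ⟨hx, hy⟩

theorem ak3_trivial :
    a ∈ Subgroup.normalClosure
          ({a ^ 3 * (b ^ 4)⁻¹, a * b * a * b⁻¹ * a⁻¹ * b⁻¹} : Set F) ∧
    b ∈ Subgroup.normalClosure
          ({a ^ 3 * (b ^ 4)⁻¹, a * b * a * b⁻¹ * a⁻¹ * b⁻¹} : Set F) := by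
  set S : Set F := {a ^ 3 * (b ^ 4)⁻¹, a * b * a * b⁻¹ * a⁻¹ * b⁻¹} with hS
  set N := Subgroup.normalClosure S with hN
  haveI : N.Normal := Subgroup.normalClosure_normal
  have mem1 : (a ^ 3 * (b ^ 4)⁻¹) ∈ N :=
    Subgroup.subset_normalClosure (by left; rfl)
  have mem2 : (a * b * a * b⁻¹ * a⁻¹ * b⁻¹) ∈ N :=
    Subgroup.subset_normalClosure (by right; rfl)
  set x : F ⧸ N := QuotientGroup.mk a with hx
  set y : F ⧸ N := QuotientGroup.mk b with hy
  have e1 : x ^ 3 = y ^ 4 := by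
    have := (QuotientGroup.eq_one_iff (a ^ 3 * (b ^ 4)⁻¹)).2 mem1
    have h : ((a ^ 3 * (b ^ 4)⁻¹ : F) : F ⧸ N) = x ^ 3 * (y ^ 4)⁻¹ := by
      push_cast [hx, hy]; rfl
    rw [h] at this
    exact mul_inv_eq_one.mp this
  have e2 : x * y * x = y * x * y := by
    have := (QuotientGroup.eq_one_iff (a * b * a * b⁻¹ * a⁻¹ * b⁻¹)).2 mem2
    have h : ((a * b * a * b⁻¹ * a⁻¹ * b⁻¹ : F) : F ⧸ N)
        = x * y * x * y⁻¹ * x⁻¹ * y⁻¹ := by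
      push_cast [hx, hy]; rfl
    rw [h] at this
    calc x * y * x = (x * y * x * y⁻¹ * x⁻¹ * y⁻¹) * (y * x * y) := by simp [pow_succ, pow_zero, one_mul, mul_assoc]
    _ = 1 * (y * x * y) := by rw [this]
    _ = y * x * y := one_mul _
  obtain ⟨hx1, hy1⟩ := ak3_key e1 e2
  constructor
  · exact (QuotientGroup.eq_one_iff a).1 hx1
  · exact (QuotientGroup.eq_one_iff b).1 hy1

end Stmt7
end

section
/- The pair (AK(2) relators) is AC-equivalent to the trivial pair: in the free group F on generators a, b, the pair (a²b⁻³, abab⁻¹a⁻¹b⁻¹) can be transformed into the pair (a, b) by a finite sequence of AC-moves (relator inversion, multiplying one relator by the other, and conjugation of a relator by an element of F). -/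
namespace Stmt10

abbrev F := FreeGroup Bool

def a : F := FreeGroup.of true
def b : F := FreeGroup.of false

inductive ACMove : F × F → F × F → Prop
  | inv_left (x y : F) : ACMove (x, y) (x⁻¹, y)
  | inv_right (x y : F) : ACMove (x, y) (x, y⁻¹)
  | mul_left (x y : F) : ACMove (x, y) (x * y, y)
  | mul_right (x y : F) : ACMove (x, y) (x, y * x)
  | conj_left (x y w : F) : ACMove (x, y) (w * x * w⁻¹, y)
  | conj_right (x y w : F) : ACMove (x, y) (x, w * y * w⁻¹)

lemma eqstep {s s' t : F × F} (h : s = s')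
    (h2 : Relation.ReflTransGen ACMove s' t) :
    Relation.ReflTransGen ACMove s t := h ▸ h2

theorem ak2_trivializable :
    Relation.ReflTransGen ACMove
      (a ^ 2 * (b ^ 3)⁻¹, a * b * a * b⁻¹ * a⁻¹ * b⁻¹) (a, b) := by
  refine eqstep (s' := ((a * a * b⁻¹ * b⁻¹ * b⁻¹), (a * b * a * b⁻¹ * a⁻¹ * b⁻¹))) (by decide) ?_
  refine Relation.ReflTransGen.head (ACMove.conj_left _ _ b⁻¹) ?_
  refine eqstep (s' := ((b⁻¹ * a * a * b⁻¹ * b⁻¹), (a * b * a * b⁻¹ * a⁻¹ * b⁻¹))) (by decide) ?_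
  refine Relation.ReflTransGen.head (ACMove.conj_right _ _ b⁻¹) ?_
  refine eqstep (s' := ((b⁻¹ * a * a * b⁻¹ * b⁻¹), (b⁻¹ * a * b * a * b⁻¹ * a⁻¹))) (by decide) ?_
  refine Relation.ReflTransGen.head (ACMove.inv_left _ _) ?_
  refine Relation.ReflTransGen.head (ACMove.conj_right _ _ (b⁻¹ * a * a * b⁻¹ * b⁻¹)⁻¹) ?_
  refine Relation.ReflTransGen.head (ACMove.mul_right _ _) ?_
  refine Relation.ReflTransGen.head (ACMove.inv_left _ _) ?_
  refine eqstep (s' := ((b⁻¹ * a * a * b⁻¹ * b⁻¹), (b * b * a⁻¹ * b * a * b⁻¹ * a⁻¹))) (by decide) ?_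
  refine Relation.ReflTransGen.head (ACMove.conj_right _ _ b⁻¹) ?_
  refine eqstep (s' := ((b⁻¹ * a * a * b⁻¹ * b⁻¹), (b * a⁻¹ * b * a * b⁻¹ * a⁻¹ * b))) (by decide) ?_
  refine Relation.ReflTransGen.head (ACMove.mul_right _ _) ?_
  refine eqstep (s' := ((b⁻¹ * a * a * b⁻¹ * b⁻¹), (b * a⁻¹ * b * a * b⁻¹ * a * b⁻¹ * b⁻¹))) (by decide) ?_
  refine Relation.ReflTransGen.head (ACMove.conj_right _ _ b⁻¹) ?_
  refine eqstep (s' := ((b⁻¹ * a * a * b⁻¹ * b⁻¹), (a⁻¹ * b * a * b⁻¹ * a * b⁻¹))) (by decide) ?_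
  refine Relation.ReflTransGen.head (ACMove.conj_right _ _ a) ?_
  refine eqstep (s' := ((b⁻¹ * a * a * b⁻¹ * b⁻¹), (b * a * b⁻¹ * a * b⁻¹ * a⁻¹))) (by decide) ?_
  refine Relation.ReflTransGen.head (ACMove.conj_right _ _ b⁻¹) ?_
  refine eqstep (s' := ((b⁻¹ * a * a * b⁻¹ * b⁻¹), (a * b⁻¹ * a * b⁻¹ * a⁻¹ * b))) (by decide) ?_
  refine Relation.ReflTransGen.head (ACMove.conj_left _ _ (a * b⁻¹ * a * b⁻¹ * a⁻¹ * b)) ?_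
  refine Relation.ReflTransGen.head (ACMove.mul_left _ _) ?_
  refine eqstep (s' := ((a * b⁻¹ * a * b⁻¹ * a * b⁻¹ * b⁻¹), (a * b⁻¹ * a * b⁻¹ * a⁻¹ * b))) (by decide) ?_
  refine Relation.ReflTransGen.head (ACMove.conj_left _ _ a⁻¹) ?_
  refine eqstep (s' := ((b⁻¹ * a * b⁻¹ * a * b⁻¹ * b⁻¹ * a), (a * b⁻¹ * a * b⁻¹ * a⁻¹ * b))) (by decide) ?_
  refine Relation.ReflTransGen.head (ACMove.conj_left _ _ b) ?_
  refine eqstep (s' := ((a * b⁻¹ * a * b⁻¹ * b⁻¹ * a * b⁻¹), (a * b⁻¹ * a * b⁻¹ * a⁻¹ * b))) (by decide) ?_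
  refine Relation.ReflTransGen.head (ACMove.inv_left _ _) ?_
  refine Relation.ReflTransGen.head (ACMove.conj_right _ _ (a * b⁻¹ * a * b⁻¹ * b⁻¹ * a * b⁻¹)⁻¹) ?_
  refine Relation.ReflTransGen.head (ACMove.mul_right _ _) ?_
  refine Relation.ReflTransGen.head (ACMove.inv_left _ _) ?_
  refine eqstep (s' := ((a * b⁻¹ * a * b⁻¹ * b⁻¹ * a * b⁻¹), (b * a⁻¹ * b * a⁻¹ * b))) (by decide) ?_
  refine Relation.ReflTransGen.head (ACMove.conj_right _ _ b) ?_
  refine eqstep (s' := ((a * b⁻¹ * a * b⁻¹ * b⁻¹ * a * b⁻¹), (b * b * a⁻¹ * b * a⁻¹))) (by decide) ?_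
  refine Relation.ReflTransGen.head (ACMove.conj_left _ _ (b * b * a⁻¹ * b * a⁻¹)) ?_
  refine Relation.ReflTransGen.head (ACMove.mul_left _ _) ?_
  refine eqstep (s' := ((a * b⁻¹), (b * b * a⁻¹ * b * a⁻¹))) (by decide) ?_
  refine Relation.ReflTransGen.head (ACMove.mul_right _ _) ?_
  refine eqstep (s' := ((a * b⁻¹), (b * b * a⁻¹))) (by decide) ?_
  refine Relation.ReflTransGen.head (ACMove.mul_right _ _) ?_
  refine eqstep (s' := ((a * b⁻¹), (b))) (by decide) ?_
  refine Relation.ReflTransGen.head (ACMove.mul_left _ _) ?_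
  refine eqstep (s' := ((a), (b))) (by decide) ?_
  exact Relation.ReflTransGen.refl

end Stmt10
end
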